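/- Similarly, under the same hypotheses, (\{f_n ∘ S_{f,ω}^{-1}\}, \{S_{g,τ}^{-1} τ_n\}) is a dual p-ABS for (\{g_n\},\{ω_n\}): x = Σ_n (f_n S_{f,ω}^{-1})(x) ω_n = Σ_n g_n(x) S_{g,τ}^{-1} τ_n for all x ∈ X. -/

import Mathlib

open scoped ENNReal
open Filter Topology

noncomputable section

/-- The sequence space `ℓ^p(ℕ)` over `ℝ`. -/
abbrev lpN (p : ℝ≥0∞) := lp (fun _ : ℕ => ℝ) p

/-- A pair `({f_n}, {τ_n})` is a p-approximate Bessel sequence (p-ABS) for `X`: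
the analysis map `x ↦ (f_n x)_n` is a well-defined bounded linear operator into `ℓ^p`,
and the synthesis map `(a_n) ↦ Σ a_n τ_n` is a well-defined bounded linear operator. -/
def IsPABS (p : ℝ≥0∞) [Fact (1 ≤ p)] {X : Type*} [NormedAddCommGroup X] [NormedSpace ℝ X]
    (f : ℕ → X →L[ℝ] ℝ) (τ : ℕ → X) : Prop :=
  (∃ θf : X →L[ℝ] lpN p, ∀ (x : X) (n : ℕ), (θf x) n = f n x) ∧
  (∃ θτ : lpN p →L[ℝ] X, ∀ a : lpN p, HasSum (fun n => (a n) • τ n) (θτ a))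

/-- A pair `({f_n}, {τ_n})` is a p-approximate Schauder frame (p-ASF) for `X`:
it is a p-ABS whose frame operator `S_{f,τ} = θ_τ ∘ θ_f` is bounded invertible. -/
def IsPASF (p : ℝ≥0∞) [Fact (1 ≤ p)] {X : Type*} [NormedAddCommGroup X] [NormedSpace ℝ X]
    (f : ℕ → X →L[ℝ] ℝ) (τ : ℕ → X) : Prop :=
  ∃ (θf : X →L[ℝ] lpN p) (θτ : lpN p →L[ℝ] X) (S : X ≃L[ℝ] X),
    (∀ (x : X) (n : ℕ), (θf x) n = f n x) ∧
    (∀ a : lpN p, HasSum (fun n => (a n) • τ n) (θτ a)) ∧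
    (S : X →L[ℝ] X) = θτ.comp θf

theorem HasSum.smul_mapL {ι 𝕜 X Y : Type*} [NontriviallyNormedField 𝕜]
    [NormedAddCommGroup X] [NormedSpace 𝕜 X] [NormedAddCommGroup Y] [NormedSpace 𝕜 Y]
    (T : X →L[𝕜] Y) {c : ι → 𝕜} {v : ι → X} {x : X}
    (h : HasSum (fun n => c n • v n) x) : HasSum (fun n => c n • T (v n)) (T x) := by
  simpa only [map_smul] using h.mapL T

section

variable {p : ℝ≥0∞} [Fact (1 ≤ p)] {X : Type*} [NormedAddCommGroup X] [NormedSpace ℝ X]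

theorem IsPABS.comp_map {f : ℕ → X →L[ℝ] ℝ} {τ : ℕ → X} (h : IsPABS p f τ)
    (A B : X →L[ℝ] X) : IsPABS p (fun n => (f n).comp A) (fun n => B (τ n)) := by
  obtain ⟨⟨θf, hθf⟩, ⟨θτ, hθτ⟩⟩ := h
  exact ⟨⟨θf.comp A, fun x n => hθf (A x) n⟩, ⟨B.comp θτ, fun a => (hθτ a).smul_mapL B⟩⟩

theorem hasSum_analysis_smul_synthesis {f : ℕ → X →L[ℝ] ℝ} {τ : ℕ → X}
    {θf : X →L[ℝ] lpN p} {θτ : lpN p →L[ℝ] X}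
    (hθf : ∀ (x : X) (n : ℕ), (θf x) n = f n x)
    (hθτ : ∀ a : lpN p, HasSum (fun n => (a n) • τ n) (θτ a)) (x : X) :
    HasSum (fun n => f n x • τ n) (θτ (θf x)) := by
  simpa only [hθf] using hθτ (θf x)

end

theorem approx_dual_generates_dual_right_general
    {X : Type*} [NormedAddCommGroup X] [NormedSpace ℝ X]
    (p : ℝ≥0∞) [Fact (1 ≤ p)]
    (f g : ℕ → X →L[ℝ] ℝ) (τ ω : ℕ → X)
    (θf θg : X →L[ℝ] lpN p) (θτ θω : lpN p →L[ℝ] X)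
    (hθf : ∀ (x : X) (n : ℕ), (θf x) n = f n x)
    (hθg : ∀ (x : X) (n : ℕ), (θg x) n = g n x)
    (hθτ : ∀ a : lpN p, HasSum (fun n => (a n) • τ n) (θτ a))
    (hθω : ∀ a : lpN p, HasSum (fun n => (a n) • ω n) (θω a))
    (Sfω Sgτ : X ≃L[ℝ] X)
    (hSfω : (Sfω : X →L[ℝ] X) = θω.comp θf)
    (hSgτ : (Sgτ : X →L[ℝ] X) = θτ.comp θg) :
    IsPABS p (fun n => (f n).comp (Sfω.symm : X →L[ℝ] X)) (fun n => Sgτ.symm (τ n)) ∧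
    (∀ x : X,
      HasSum (fun n => f n (Sfω.symm x) • ω n) x ∧
      HasSum (fun n => g n x • Sgτ.symm (τ n)) x) := by
  refine ⟨IsPABS.comp_map ⟨⟨θf, hθf⟩, ⟨θτ, hθτ⟩⟩ Sfω.symm Sgτ.symm, fun x => ⟨?_, ?_⟩⟩
  · have hx : θω (θf (Sfω.symm x)) = x := by
      rw [← ContinuousLinearMap.comp_apply, ← hSfω]
      exact Sfω.apply_symm_apply x
    simpa only [hx] using hasSum_analysis_smul_synthesis hθf hθω (Sfω.symm x)
  · have hx : θτ (θg x) = Sgτ x := by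
      rw [← ContinuousLinearMap.comp_apply, ← hSgτ, ContinuousLinearEquiv.coe_coe]
    have h := (hasSum_analysis_smul_synthesis hθg hθτ x).smul_mapL (Sgτ.symm : X →L[ℝ] X)
    rwa [hx, ContinuousLinearEquiv.coe_coe, Sgτ.symm_apply_apply] at h

/-- approximately dual p-ABSs generate a dual:
`({f_n ∘ S_{f,ω}⁻¹}, {S_{g,τ}⁻¹ τ_n})` is a dual p-ABS for `({g_n},{ω_n})`. -/
theorem approx_dual_generates_dual_right
    {X : Type*} [NormedAddCommGroup X] [NormedSpace ℝ X] [CompleteSpace X]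
    (p : ℝ≥0∞) [Fact (1 ≤ p)] (hp : p ≠ ∞)
    (f g : ℕ → X →L[ℝ] ℝ) (τ ω : ℕ → X)
    (θf θg : X →L[ℝ] lpN p) (θτ θω : lpN p →L[ℝ] X)
    (hθf : ∀ (x : X) (n : ℕ), (θf x) n = f n x)
    (hθg : ∀ (x : X) (n : ℕ), (θg x) n = g n x)
    (hθτ : ∀ a : lpN p, HasSum (fun n => (a n) • τ n) (θτ a))
    (hθω : ∀ a : lpN p, HasSum (fun n => (a n) • ω n) (θω a))
    (h1 : ‖ContinuousLinearMap.id ℝ X - θω.comp θf‖ < 1)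
    (h2 : ‖ContinuousLinearMap.id ℝ X - θτ.comp θg‖ < 1)
    (Sfω Sgτ : X ≃L[ℝ] X)
    (hSfω : (Sfω : X →L[ℝ] X) = θω.comp θf)
    (hSgτ : (Sgτ : X →L[ℝ] X) = θτ.comp θg) :
    IsPABS p (fun n => (f n).comp (Sfω.symm : X →L[ℝ] X)) (fun n => Sgτ.symm (τ n)) ∧
    (∀ x : X,
      HasSum (fun n => f n (Sfω.symm x) • ω n) x ∧
      HasSum (fun n => g n x • Sgτ.symm (τ n)) x) :=
  approx_dual_generates_dual_right_general p f g τ ω θf θg θτ θω hθf hθg hθτ hθω Sfω Sgτ hSfω hSgτ
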